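/- Consider the tournament in which a single round-robin preliminary group with team set {a,b,c} is ranked by a monotonic ranking method R, the two top-ranked teams qualify for the main round, and the match played between the two qualified teams is carried over. Under the results v (a beats c 4-0, b beats a 1-0, c beats b 2-0) the qualified teams are a and b and team a's carried-over number of points is β (its loss to b); under the results v̄ (a beats c 2-0, b beats a 1-0, c beats b 2-0) the qualified teams are a and c and team a's carried-over number of points is α (its win over c). The result set v̄ is obtained from v by team a scoring fewer goals and conceding no fewer goals in its matches, and α>β; hence team a can manipulate and this tournament is not strategy-proof. -/
import Mathlib


/-!
A single round-robin group: every pair of distinct teams plays exactly one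
match; `v x y = (p, q)` records the goals scored by `x` and by `y` in their
match (so `v y x = (q, p)`), and no match ends in a draw.
-/

open Finset

section Defs

variable {T : Type*} [DecidableEq T] [Fintype T]

/-- Number of wins of `x` in its matches against the teams of `L`. -/
def winsIn (v : T → T → ℕ × ℕ) (L : Finset T) (x : T) : ℕ :=
  (L.filter fun y => y ≠ x ∧ (v x y).2 < (v x y).1).card

/-- Number of losses of `x` in its matches against the teams of `L`. -/
def lossesIn (v : T → T → ℕ × ℕ) (L : Finset T) (x : T) : ℕ :=
  (L.filter fun y => y ≠ x ∧ (v x y).1 < (v x y).2).card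

/-- Number of points of `x` computed from its matches against the teams of `L`:
`α` points per win and `β` points per loss.  For `L = Finset.univ` this is the
number of points `s_v(x)`; for `L ⊆ X \ {x}` it is the head-to-head number of
points `s_v^L(x)`. -/
def ptsIn (α β : ℤ) (v : T → T → ℕ × ℕ) (L : Finset T) (x : T) : ℤ :=
  α * winsIn v L x + β * lossesIn v L x

/-- Goal difference of `x` computed from its matches against the teams of `L`
(goals scored minus goals conceded).  For `L = Finset.univ` this is `gd_v(x)`;
for `L ⊆ X \ {x}` it is the head-to-head goal difference `gd_v^L(x)`. -/
def gdIn (v : T → T → ℕ × ℕ) (L : Finset T) (x : T) : ℤ :=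
  ∑ y ∈ L.filter (fun y => y ≠ x), (((v x y).1 : ℤ) - ((v x y).2 : ℤ))

/-- The set of all teams with the same (total) number of points as `x`. -/
def tied (α β : ℤ) (v : T → T → ℕ × ℕ) (x : T) : Finset T :=
  univ.filter fun z => ptsIn α β v univ z = ptsIn α β v univ x

/-- `x` head-to-head dominates `y`: they have the same total number of points
and, with respect to the set `L` of all teams with this number of points, `x`
has strictly more head-to-head points than `y`, or equally many head-to-head
points and a strictly greater head-to-head goal difference. -/
def Dominates (α β : ℤ) (v : T → T → ℕ × ℕ) (x y : T) : Prop :=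
  ptsIn α β v univ x = ptsIn α β v univ y ∧
    (ptsIn α β v (tied α β v x) x > ptsIn α β v (tied α β v x) y ∨
      (ptsIn α β v (tied α β v x) x = ptsIn α β v (tied α β v x) y ∧
        gdIn v (tied α β v x) x > gdIn v (tied α β v x) y))

/-- The ranking `r` (a strict order on the teams) is monotonic with respect to
the complete result set `v`: (1) strictly more points implies a strictly higher
rank; (2) equal points together with a strictly greater goal difference and
head-to-head domination imply a strictly higher rank. -/
def Monotonic (α β : ℤ) (v : T → T → ℕ × ℕ) (r : T → T → Prop) : Prop :=
  (∀ x y : T, ptsIn α β v univ x > ptsIn α β v univ y → r x y) ∧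
    (∀ x y : T, ptsIn α β v univ x = ptsIn α β v univ y →
      gdIn v univ x > gdIn v univ y → Dominates α β v x y → r x y)

end Defs

/-- The results of Example 3.1 on teams `a = 0`, `b = 1`, `c = 2`:
`a` beats `c` 4-0, `b` beats `a` 1-0, `c` beats `b` 2-0. -/
def vEx : Fin 3 → Fin 3 → ℕ × ℕ :=
  ![![(0, 0), (0, 1), (4, 0)],
    ![(1, 0), (0, 0), (0, 2)],
    ![(0, 4), (2, 0), (0, 0)]]

/-- The manipulated results of Example 3.1 on teams `a = 0`, `b = 1`, `c = 2`:
`a` beats `c` only 2-0, `b` beats `a` 1-0, `c` beats `b` 2-0. -/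
def vEx' : Fin 3 → Fin 3 → ℕ × ℕ :=
  ![![(0, 0), (0, 1), (2, 0)],
    ![(1, 0), (0, 0), (0, 2)],
    ![(0, 2), (2, 0), (0, 0)]]

/-- `v` records each match symmetrically in both orders. -/
def SymRes (v : Fin 3 → Fin 3 → ℕ × ℕ) : Prop :=
  ∀ x y : Fin 3, (v x y).1 = (v y x).2 ∧ (v x y).2 = (v y x).1

/-- No match between distinct teams ends in a draw. -/
def NoDraws (v : Fin 3 → Fin 3 → ℕ × ℕ) : Prop :=
  ∀ x y : Fin 3, x ≠ y → (v x y).1 ≠ (v x y).2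

/-- A team qualifies (is among the two top-ranked of the three teams) under the
strict total order `r` iff it is ranked above some team. -/
def Qual (r : Fin 3 → Fin 3 → Prop) (x : Fin 3) : Prop :=
  ∃ y : Fin 3, r x y

/-- Team `x` can manipulate the tournament in which the two teams ranked first
and second by the ranking method `R` qualify for the main round and a qualified
team's carried-over points (`α` for a win, `β` for a loss) and goal difference
are computed from its preliminary-round match against the other qualified team
only: there are complete result sets `v` and `w`, where `w` is obtained from `v`
by changing only matches involving `x` so that in each of its matches `x` scores
weakly fewer and concedes weakly more goals, such that `x` qualifies under both,
and `x`'s carried-over number of points is strictly larger under `w`, or it is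
equal and `x`'s carried-over goal difference is strictly larger. -/
def Manip (α β : ℤ) (R : (Fin 3 → Fin 3 → ℕ × ℕ) → Fin 3 → Fin 3 → Prop)
    (x : Fin 3) : Prop :=
  ∃ v w : Fin 3 → Fin 3 → ℕ × ℕ, SymRes v ∧ NoDraws v ∧ SymRes w ∧ NoDraws w ∧
    (∀ y z : Fin 3, y ≠ x → z ≠ x → w y z = v y z) ∧
    (∀ y : Fin 3, (w x y).1 ≤ (v x y).1 ∧ (v x y).2 ≤ (w x y).2) ∧
    Qual (R v) x ∧ Qual (R w) x ∧
    ∃ q q' : Fin 3, q ≠ x ∧ Qual (R v) q ∧ q' ≠ x ∧ Qual (R w) q' ∧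
      (ptsIn α β w {q'} x > ptsIn α β v {q} x ∨
        (ptsIn α β w {q'} x = ptsIn α β v {q} x ∧ gdIn w {q'} x > gdIn v {q} x))

/-- The top-two tournament with ranking method `R` is strategy-proof if no team
can manipulate. -/
def SP (α β : ℤ) (R : (Fin 3 → Fin 3 → ℕ × ℕ) → Fin 3 → Fin 3 → Prop) : Prop :=
  ∀ x : Fin 3, ¬Manip α β R x

-- Auxiliary lemmas

lemma winsEx (z : Fin 3) : winsIn vEx univ z = 1 := by fin_cases z <;> decide

lemma lossesEx (z : Fin 3) : lossesIn vEx univ z = 1 := by fin_cases z <;> decide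

lemma winsEx' (z : Fin 3) : winsIn vEx' univ z = 1 := by fin_cases z <;> decide

lemma lossesEx' (z : Fin 3) : lossesIn vEx' univ z = 1 := by fin_cases z <;> decide

lemma ptsEx (α β : ℤ) (z : Fin 3) : ptsIn α β vEx univ z = α + β := by
  simp [ptsIn, winsEx, lossesEx]

lemma ptsEx' (α β : ℤ) (z : Fin 3) : ptsIn α β vEx' univ z = α + β := by
  simp [ptsIn, winsEx', lossesEx']

lemma tiedEx (α β : ℤ) (x : Fin 3) : tied α β vEx x = univ := by
  refine Finset.filter_true_of_mem fun z _ => ?_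
  rw [ptsEx, ptsEx]

lemma tiedEx' (α β : ℤ) (x : Fin 3) : tied α β vEx' x = univ := by
  refine Finset.filter_true_of_mem fun z _ => ?_
  rw [ptsEx', ptsEx']

lemma domEx (α β : ℤ) (x y : Fin 3) (h : gdIn vEx univ x > gdIn vEx univ y) :
    Dominates α β vEx x y := by
  refine ⟨by rw [ptsEx, ptsEx], Or.inr ⟨?_, ?_⟩⟩ <;> rw [tiedEx]
  · rw [show ptsIn α β vEx univ x = α * winsIn vEx univ x + β * lossesIn vEx univ x from rfl,
      show ptsIn α β vEx univ y = α * winsIn vEx univ y + β * lossesIn vEx univ y from rfl,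
      winsEx, winsEx, lossesEx, lossesEx]
  · exact h

lemma domEx' (α β : ℤ) (x y : Fin 3) (h : gdIn vEx' univ x > gdIn vEx' univ y) :
    Dominates α β vEx' x y := by
  refine ⟨by rw [ptsEx', ptsEx'], Or.inr ⟨?_, ?_⟩⟩ <;> rw [tiedEx']
  · rw [show ptsIn α β vEx' univ x = α * winsIn vEx' univ x + β * lossesIn vEx' univ x from rfl,
      show ptsIn α β vEx' univ y = α * winsIn vEx' univ y + β * lossesIn vEx' univ y from rfl,
      winsEx', winsEx', lossesEx', lossesEx']
  · exact h


lemma symEx : SymRes vEx := by intro x y; fin_cases x <;> fin_cases y <;> decide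
lemma ndEx : NoDraws vEx := by intro x y h; fin_cases x <;> fin_cases y <;> first | decide | simp at h
lemma symEx2 : SymRes vEx' := by intro x y; fin_cases x <;> fin_cases y <;> decide
lemma ndEx2 : NoDraws vEx' := by intro x y h; fin_cases x <;> fin_cases y <;> first | decide | simp at h

/-- **Example 3.1.** In the tournament in which a single round-robin group of
teams `{a, b, c}` (with `a = 0`, `b = 1`, `c = 2`) is ranked by a monotonic
ranking method `R`, the two top-ranked teams qualify, and the match between the
two qualified teams is carried over: under `vEx` the qualified teams are `a` and
`b`, and `a`'s carried-over number of points is `β`; under `vEx'` the qualified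
teams are `a` and `c`, and `a`'s carried-over number of points is `α`; `vEx'` is
obtained from `vEx` by `a` scoring fewer and conceding no fewer goals in its
matches, and `α > β`; hence team `a` can manipulate and the tournament is not
strategy-proof. -/
theorem example31_manipulation (α β : ℤ) (hαβ : β < α)
    (R : (Fin 3 → Fin 3 → ℕ × ℕ) → Fin 3 → Fin 3 → Prop)
    (hR : ∀ v : Fin 3 → Fin 3 → ℕ × ℕ, SymRes v → NoDraws v →
      (∀ x, ¬R v x x) ∧ (∀ x y z, R v x y → R v y z → R v x z) ∧
      (∀ x y, x ≠ y → R v x y ∨ R v y x) ∧ Monotonic α β v (R v)) :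
    (∀ x : Fin 3, Qual (R vEx) x ↔ x ≠ 2) ∧
    ptsIn α β vEx {1} 0 = β ∧
    (∀ x : Fin 3, Qual (R vEx') x ↔ x ≠ 1) ∧
    ptsIn α β vEx' {2} 0 = α ∧
    (∀ y z : Fin 3, y ≠ 0 → z ≠ 0 → vEx' y z = vEx y z) ∧
    (∀ y : Fin 3, (vEx' 0 y).1 ≤ (vEx 0 y).1 ∧ (vEx 0 y).2 ≤ (vEx' 0 y).2) ∧
    Manip α β R 0 ∧ ¬SP α β R := by
  
  obtain ⟨irr, trans, _, _, mono2⟩ := hR vEx symEx ndEx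
  obtain ⟨irr', trans', _, _, mono2'⟩ := hR vEx' symEx2 ndEx2
  have g0 : gdIn vEx univ (0 : Fin 3) = 3 := by decide
  have g1 : gdIn vEx univ (1 : Fin 3) = -1 := by decide
  have g2 : gdIn vEx univ (2 : Fin 3) = -2 := by decide
  have g0' : gdIn vEx' univ (0 : Fin 3) = 1 := by decide
  have g1' : gdIn vEx' univ (1 : Fin 3) = -1 := by decide
  have g2' : gdIn vEx' univ (2 : Fin 3) = 0 := by decide
  have h01 : R vEx 0 1 := mono2 0 1 (by rw [ptsEx, ptsEx]) (by omega)
    (domEx α β 0 1 (by omega))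
  have h12 : R vEx 1 2 := mono2 1 2 (by rw [ptsEx, ptsEx]) (by omega)
    (domEx α β 1 2 (by omega))
  have h02 : R vEx 0 2 := trans 0 1 2 h01 h12
  have h02' : R vEx' 0 2 := mono2' 0 2 (by rw [ptsEx', ptsEx']) (by omega)
    (domEx' α β 0 2 (by omega))
  have h21' : R vEx' 2 1 := mono2' 2 1 (by rw [ptsEx', ptsEx']) (by omega)
    (domEx' α β 2 1 (by omega))
  have h01' : R vEx' 0 1 := trans' 0 2 1 h02' h21'
  have hq : ∀ x : Fin 3, Qual (R vEx) x ↔ x ≠ 2 := by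
    intro x
    constructor
    · rintro ⟨y, hy⟩ rfl
      fin_cases y
      · exact irr 2 (trans 2 0 2 hy h02)
      · exact irr 2 (trans 2 1 2 hy h12)
      · exact irr 2 hy
    · intro hx
      fin_cases x
      · exact ⟨1, h01⟩
      · exact ⟨2, h12⟩
      · exact absurd rfl hx
  have hq' : ∀ x : Fin 3, Qual (R vEx') x ↔ x ≠ 1 := by
    intro x
    constructor
    · rintro ⟨y, hy⟩ rfl
      fin_cases y
      · exact irr' 1 (trans' 1 0 1 hy h01')
      · exact irr' 1 hy
      · exact irr' 1 (trans' 1 2 1 hy h21')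
    · intro hx
      fin_cases x
      · exact ⟨2, h02'⟩
      · exact absurd rfl hx
      · exact ⟨1, h21'⟩
  have hp1 : ptsIn α β vEx {1} 0 = β := by
    show α * (winsIn vEx {1} 0 : ℤ) + β * (lossesIn vEx {1} 0 : ℤ) = β
    rw [show winsIn vEx {1} 0 = 0 from by decide, show lossesIn vEx {1} 0 = 1 from by decide]
    ring
  have hp2 : ptsIn α β vEx' {2} 0 = α := by
    show α * (winsIn vEx' {2} 0 : ℤ) + β * (lossesIn vEx' {2} 0 : ℤ) = α
    rw [show winsIn vEx' {2} 0 = 1 from by decide, show lossesIn vEx' {2} 0 = 0 from by decide]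
    ring
  have hmanip : Manip α β R 0 := by
    refine ⟨vEx, vEx', symEx, ndEx, symEx2, ndEx2,
      ?_, by decide, (hq 0).2 (by decide), (hq' 0).2 (by decide),
      1, 2, by decide, (hq 1).2 (by decide), by decide, (hq' 2).2 (by decide),
      Or.inl ?_⟩
    · intro y z hy hz; fin_cases y <;> fin_cases z <;> first | rfl | simp at hy hz
    · rw [hp1, hp2]; exact hαβ
  exact ⟨hq, hp1, hq', hp2,
    fun y z hy hz => by fin_cases y <;> fin_cases z <;> first | rfl | simp at hy hz,
    by decide, hmanip, fun h => h 0 hmanip⟩
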